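/- arXiv:1905.11657 — 5 statements merged into one kernel-verified Lean document; each statement's English description precedes it below -/
import Mathlib

section
/- Let f ∈ ℚ[X] be a polynomial of degree d ≥ 2. There exists a constant C depending only on f such that for all α ∈ ℚ and all n ≥ 1, the Weil height satisfies h(f^{(n)}(α)) ≥ d^n · (h(α) - C), where f^{(n)} denotes the n-th iterate of f. -/
/-!
Write `d = m + 1` and divide `X ^ (2m+1)` by `f`: `X ^ (2m+1) = f Q + R` with `deg Q, deg R ≤ m`.
Homogenizing, `X ^ (2m+1)` and `Y ^ (2m+1)` are combinations of `F(X, Y)` and `Y ^ d` with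
coefficients that are forms of degree `m`, so the height of `[F(x, 1) : 1]` is at least
`(2m+1) h(x) - m h(x) - C = d h(x) - C`. With `c = C / (d - 1)` this reads
`d (h(x) - c) ≤ h(f(x)) - c`, which iterates to the claim.
-/

open Polynomial

/-- The Weil logarithmic height of a rational number `a/b` in lowest terms:
`h(a/b) = max (log |a|) (log |b|)`. -/
noncomputable def weilHeight (q : ℚ) : ℝ :=
  Real.log (max (q.num.natAbs : ℝ) (q.den : ℝ))

open Height

section

variable {K : Type*} [Field K]

theorem Polynomial.natDegree_div_le (p q : K[X]) :
    (p / q).natDegree ≤ p.natDegree - q.natDegree := by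
  by_cases hpq : p / q = 0
  · simp [hpq]
  have hq : q ≠ 0 := by rintro rfl; simp at hpq
  have hdeg := degree_add_div hq (not_lt.mp (mt (Polynomial.div_eq_zero_iff hq).mpr hpq))
  rw [← degree_mul] at hdeg
  have := natDegree_eq_of_degree_eq hdeg
  rw [natDegree_mul hq hpq] at this
  omega

theorem Polynomial.exists_X_pow_eq_mul_add {f : K[X]} {m : ℕ} (hf : f.natDegree = m + 1) :
    ∃ Q R : K[X], Q.natDegree ≤ m ∧ R.natDegree ≤ m ∧ X ^ (2 * m + 1) = f * Q + R := by
  refine ⟨_, _, ?_, ?_, (EuclideanDomain.div_add_mod (X ^ (2 * m + 1)) f).symm⟩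
  · refine (natDegree_div_le _ f).trans ?_
    rw [natDegree_X_pow, hf]
    omega
  · have := natDegree_mod_lt (X ^ (2 * m + 1)) (q := f) (by omega)
    omega

variable [AdmissibleAbsValues K]

theorem Polynomial.exists_add_natDegree_mul_logHeight₁_le (f : K[X]) :
    ∃ C, ∀ x, C + f.natDegree * logHeight₁ x ≤ logHeight₁ (f.eval x) := by
  obtain hf | ⟨m, hm⟩ : f.natDegree = 0 ∨ ∃ m, f.natDegree = m + 1 :=
    Nat.eq_zero_or_eq_succ_pred _ |>.imp_right fun h => ⟨_, h⟩
  · exact ⟨0, fun x => by simp [hf, zero_le_logHeight₁]⟩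
  obtain ⟨Q, R, hQ, hR, hQR⟩ := exists_X_pow_eq_mul_add hm
  -- `X ^ (2m+1) = Q F + R Y ^ (m+1)` and `Y ^ (2m+1) = 0 F + Y ^ m Y ^ (m+1)` on the chart `Y = 1`
  let q : Fin 2 × Fin 2 → MvPolynomial (Fin 2) K :=
    fun kj => ![![Q.homogenize m, R.homogenize m], ![0, MvPolynomial.X 1 ^ m]] kj.1 kj.2
  let p : Fin 2 → MvPolynomial (Fin 2) K := ![f.homogenize (m + 1), MvPolynomial.X 1 ^ (m + 1)]
  have hq : ∀ kj, (q kj).IsHomogeneous m := by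
    rintro ⟨k, j⟩
    fin_cases k <;> fin_cases j
    · exact isHomogeneous_homogenize Q
    · exact isHomogeneous_homogenize R
    · exact MvPolynomial.isHomogeneous_zero _ _ _
    · exact MvPolynomial.isHomogeneous_X_pow 1 m
  obtain ⟨C, hC⟩ := logHeight_eval_ge' (N := m + 1) hq
  refine ⟨C, fun x => ?_⟩
  have hp : (fun j => (p j).eval ![x, 1]) = ![f.eval x, 1] := by
    ext j
    fin_cases j <;> simp [p, eval_homogenize hm.le]
  have hrel : ∀ k, ∑ j, (q (k, j)).eval ![x, 1] * (p j).eval ![x, 1] =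
      ![x, 1] k ^ (m + (m + 1)) := by
    have hx : f.eval x * Q.eval x + R.eval x = x ^ (m + (m + 1)) := by
      simpa [two_mul, add_assoc] using (congrArg (eval x) hQR).symm
    intro k
    fin_cases k
    · simpa [q, p, eval_homogenize, hQ, hR, hm, mul_comm] using hx
    · simp [q, p]
  have := hC p hrel
  rwa [hp, ← logHeight₁_eq_logHeight, ← logHeight₁_eq_logHeight, ← hm] at this

end

theorem weilHeight_eq_logHeight₁ (q : ℚ) : weilHeight q = logHeight₁ q := by
  rw [Rat.logHeight₁_eq_log_max, weilHeight, Nat.cast_max]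

theorem pow_mul_sub_le_iterate_sub {α : Type*} (g : α → α) (H : α → ℝ) {d c : ℝ} (hd : 0 ≤ d)
    (hg : ∀ x, d * (H x - c) ≤ H (g x) - c) (x : α) (n : ℕ) :
    d ^ n * (H x - c) ≤ H (g^[n] x) - c := by
  induction n with
  | zero => simp
  | succ n ih =>
    rw [Function.iterate_succ_apply', pow_succ', mul_assoc]
    exact (mul_le_mul_of_nonneg_left ih hd).trans (hg _)

theorem height_iterate_lower_bound (f : ℚ[X]) (d : ℕ) (hd : f.natDegree = d) (hd2 : 2 ≤ d) :
    ∃ C : ℝ, ∀ α : ℚ, ∀ n : ℕ, 1 ≤ n →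
      (d : ℝ) ^ n * (weilHeight α - C) ≤ weilHeight ((fun x => f.eval x)^[n] α) := by
  obtain ⟨C, hC⟩ := f.exists_add_natDegree_mul_logHeight₁_le
  have hd1 : (0 : ℝ) < d - 1 := by
    have : (2 : ℝ) ≤ d := by exact_mod_cast hd2
    linarith
  set c := max (-C) 0 / (d - 1)
  have hc : (d - 1) * c = max (-C) 0 := mul_div_cancel₀ _ hd1.ne'
  have hc0 : 0 ≤ c := div_nonneg (le_max_right _ _) hd1.le
  have step : ∀ x, (d : ℝ) * (weilHeight x - c) ≤ weilHeight (f.eval x) - c := by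
    intro x
    have := hC x
    rw [hd, ← weilHeight_eq_logHeight₁, ← weilHeight_eq_logHeight₁] at this
    linarith [le_max_left (-C) 0]
  refine ⟨c, fun α n _ => ?_⟩
  linarith [pow_mul_sub_le_iterate_sub _ _ (Nat.cast_nonneg d) step α n]
end

section
/- Let f ∈ ℚ[X] be a polynomial of degree d ≥ 2 and let γ ∈ ℚ be a point that is not pre-periodic for f (i.e., the forward orbit {f^{(n)}(γ) : n ≥ 0} is infinite). Then the Weil heights h(f^{(n)}(γ)) tend to infinity as n → ∞; moreover there exist constants n₀ and c > 0 depending only on f and γ such that h(f^{(n)}(γ)) ≥ c · d^{n - n₀} for all n ≥ n₀. -/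
open Polynomial Filter

lemma one_le_weilMax (q : ℚ) : (1:ℝ) ≤ max (q.num.natAbs : ℝ) (q.den : ℝ) :=
  le_max_of_le_right (by exact_mod_cast q.pos)

lemma finite_setOf_weilHeight_le (B : ℝ) : {q : ℚ | weilHeight q ≤ B}.Finite := by
  set M : ℕ := ⌈Real.exp B⌉₊ with hM
  have : {q : ℚ | weilHeight q ≤ B} ⊆
      (fun p : ℤ × ℕ => (p.1 : ℚ) / (p.2 : ℚ)) '' (Set.Icc (-(M:ℤ)) M ×ˢ Set.Icc 0 M) := by
    intro q hq
    have hpos : (0:ℝ) < max (q.num.natAbs : ℝ) (q.den : ℝ) :=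
      lt_of_lt_of_le one_pos (one_le_weilMax q)
    have hle : max (q.num.natAbs : ℝ) (q.den : ℝ) ≤ Real.exp B :=
      (Real.log_le_iff_le_exp hpos).mp hq
    have h1 : (q.num.natAbs : ℝ) ≤ M := le_trans (le_trans (le_max_left _ _) hle) (Nat.le_ceil _)
    have h2 : (q.den : ℝ) ≤ M := le_trans (le_trans (le_max_right _ _) hle) (Nat.le_ceil _)
    have h1' : q.num.natAbs ≤ M := by exact_mod_cast h1
    have h2' : q.den ≤ M := by exact_mod_cast h2
    refine ⟨(q.num, q.den), ⟨?_, ⟨Nat.zero_le _, h2'⟩⟩, by simp [Rat.num_div_den]⟩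
    constructor <;> omega
  exact Set.Finite.subset (Set.Finite.image _ (((Set.finite_Icc _ _)).prod (Set.finite_Icc _ _))) this


lemma exists_height_bound (f : ℚ[X]) (d : ℕ) (hd : f.natDegree = d) (hd1 : 1 ≤ d) :
    ∃ C : ℝ, 0 ≤ C ∧ ∀ x : ℚ, f.eval x ≠ 0 →
      (d : ℝ) * weilHeight x - C ≤ weilHeight (f.eval x) := by
  have hf0 : f ≠ 0 := by intro h; rw [h] at hd; simp at hd; omega
  -- common denominator
  set D : ℕ := ∏ i ∈ f.support, (f.coeff i).den with hDdef
  have hD1 : 1 ≤ D := Nat.one_le_iff_ne_zero.mpr (Finset.prod_ne_zero_iff.mpr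
    (fun i _ => (f.coeff i).den_nz))
  have hdvd : ∀ i, (f.coeff i).den ∣ D := by
    intro i
    by_cases hi : i ∈ f.support
    · exact Finset.dvd_prod_of_mem _ hi
    · rw [Polynomial.notMem_support_iff] at hi
      rw [hi]
      simp
  -- integer coefficients
  set b : ℕ → ℤ := fun i => (f.coeff i).num * ((D / (f.coeff i).den : ℕ) : ℤ) with hbdef
  have hb : ∀ i, (b i : ℚ) = f.coeff i * D := by
    intro i
    obtain ⟨m, hm⟩ := hdvd i
    have hm' : D / (f.coeff i).den = m := by rw [hm]; exact Nat.mul_div_cancel_left m (f.coeff i).pos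
    rw [hbdef]
    simp only
    rw [hm', hm]
    push_cast
    rw [← Rat.mul_den_eq_num (f.coeff i)]
    ring
  have hbd : b d ≠ 0 := by
    intro h
    have h2 : ((b d : ℤ) : ℚ) = 0 := by rw [h]; simp
    rw [hb d] at h2
    have hc : f.coeff d ≠ 0 := by
      rw [← hd]; exact Polynomial.leadingCoeff_ne_zero.mpr hf0
    have hD0 : (D : ℚ) ≠ 0 := by positivity
    exact hc ((mul_eq_zero.mp h2).resolve_right hD0)
  set S : ℤ := ∑ i ∈ Finset.range (d+1), |b i| with hSdef
  have hS1 : 1 ≤ S := by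
    have h1 : 1 ≤ |b d| := Int.one_le_abs (by exact_mod_cast hbd)
    have h2 : |b d| ≤ S := Finset.single_le_sum (f := fun i => |b i|)
      (fun i _ => abs_nonneg _) (Finset.self_mem_range_succ d)
    linarith
  set G : ℤ := (D : ℤ) * |b d| ^ d with hGdef
  have hG1 : 1 ≤ G := by
    have h1 : 1 ≤ |b d| := Int.one_le_abs (by exact_mod_cast hbd)
    have h2 : (1:ℤ) ≤ |b d| ^ d := one_le_pow₀ h1
    have hD1' : (1:ℤ) ≤ (D:ℤ) := by exact_mod_cast hD1
    nlinarith
  have hG0 : (0:ℤ) < G := by linarith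
  clear_value D b S G
  refine ⟨Real.log ((G : ℝ) * (2 * (S:ℝ)) ^ d), Real.log_nonneg ?_, ?_⟩
  · have hS1' : (1:ℝ) ≤ (S:ℝ) := by exact_mod_cast hS1
    have hG1' : (1:ℝ) ≤ (G:ℝ) := by exact_mod_cast hG1
    have : (1:ℝ) ≤ (2 * (S:ℝ)) ^ d := one_le_pow₀ (by linarith)
    nlinarith
  intro x hx
  set p : ℤ := x.num with hpdef
  set q : ℤ := (x.den : ℤ) with hqdef
  have hq1 : 1 ≤ q := by rw [hqdef]; have := x.pos; omega
  set N : ℤ := ∑ i ∈ Finset.range (d+1), b i * p ^ i * q ^ (d - i) with hNdef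
  set M : ℤ := (D:ℤ) * q ^ d with hMdef
  clear_value p q N M
  have hM0 : 0 < M := by
    have : (0:ℤ) < q ^ d := by positivity
    have hD1' : (1:ℤ) ≤ (D:ℤ) := by exact_mod_cast hD1
    nlinarith
  -- the key identity
  have hxq : (p : ℚ) = x * (q : ℚ) := by
    rw [hpdef, hqdef]
    push_cast
    exact (Rat.mul_den_eq_num x).symm
  have hNM : (N : ℚ) = f.eval x * (M : ℚ) := by
    rw [Polynomial.eval_eq_sum_range' (n := d + 1) (by omega : f.natDegree < d + 1) x]
    rw [hNdef, hMdef]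
    push_cast
    rw [Finset.sum_mul]
    refine Finset.sum_congr rfl (fun i hi => ?_)
    have hid : i ≤ d := by have := Finset.mem_range.mp hi; omega
    have hiq : ((q:ℚ)) ^ i * ((q:ℚ)) ^ (d - i) = ((q:ℚ)) ^ d := by
      rw [← pow_add]
      congr 1
      omega
    have : (b i : ℚ) * (p:ℚ) ^ i * (q:ℚ) ^ (d - i)
        = f.coeff i * x ^ i * ((D:ℚ) * ((q:ℚ) ^ i * (q:ℚ) ^ (d - i))) := by
      rw [hb i, hxq, mul_pow]
      ring
    rw [this, hiq]
  have hM0' : (M:ℚ) ≠ 0 := by exact_mod_cast hM0.ne'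
  have hr : f.eval x = (N : ℚ) / (M : ℚ) := by
    rw [hNM]
    field_simp
  have hN0 : N ≠ 0 := by
    intro h
    rw [h] at hr
    simp at hr
    exact hx hr
  have hdenM : ((f.eval x).den : ℤ) ∣ M := by
    have := Rat.den_dvd N M
    rwa [Rat.divInt_eq_div, ← hr] at this
  set k : ℤ := M / ((f.eval x).den : ℤ) with hkdef
  have hkM : M = ((f.eval x).den : ℤ) * k := (Int.mul_ediv_cancel' hdenM).symm
  clear_value k
  have hden0 : (0:ℤ) < ((f.eval x).den : ℤ) := by exact_mod_cast (f.eval x).pos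
  have hk0 : 0 < k := by nlinarith [hkM ▸ hM0]
  have hkN : N = (f.eval x).num * k := by
    have : (N : ℚ) = ((f.eval x).num : ℚ) * (k : ℚ) := by
      rw [hNM, hkM]
      push_cast
      rw [← Rat.mul_den_eq_num (f.eval x)]
      ring
    exact_mod_cast this
  have hkdvdN : k ∣ N := ⟨(f.eval x).num, by rw [hkN]; ring⟩
  have hkdvdM : k ∣ M := ⟨((f.eval x).den : ℤ), by rw [hkM]; ring⟩
  -- gcd chain: k ≤ G
  set R : ℤ := ∑ i ∈ Finset.range d, b i * p ^ i * q ^ (d - 1 - i) with hRdef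
  clear_value R
  have hNsplit : N = q * R + b d * p ^ d := by
    rw [hNdef, Finset.sum_range_succ, Nat.sub_self, pow_zero, mul_one, hRdef, Finset.mul_sum]
    congr 1
    refine Finset.sum_congr rfl (fun i hi => ?_)
    have hid : i < d := Finset.mem_range.mp hi
    rw [show d - i = (d - 1 - i) + 1 from by omega, pow_succ]
    ring
  have hg1 : gcd N q ∣ b d * p ^ d := by
    have h1 : gcd N q ∣ N := gcd_dvd_left N q
    have h2 : gcd N q ∣ q * R := (gcd_dvd_right N q).mul_right R
    have h3 : b d * p ^ d = N - q * R := by rw [hNsplit]; ring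
    rw [h3]
    exact dvd_sub h1 h2
  have hcop : IsCoprime q p := by
    rw [Int.isCoprime_iff_gcd_eq_one, hpdef, hqdef, Int.gcd]
    simp only [Int.natAbs_natCast]
    exact Nat.Coprime.symm x.reduced
  have hgb : gcd N q ∣ b d := by
    have hc2 : IsCoprime (gcd N q) (p ^ d) :=
      (hcop.of_isCoprime_of_dvd_left (gcd_dvd_right N q)).pow_right
    exact hc2.dvd_of_dvd_mul_right hg1
  have hkG : k ≤ G := by
    have h1 : k ∣ gcd N M := dvd_gcd hkdvdN hkdvdM
    have h2 : gcd N M ∣ gcd N (D:ℤ) * gcd N (q ^ d) := by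
      rw [hMdef]
      exact gcd_mul_dvd_mul_gcd N (D:ℤ) (q ^ d)
    have h3 : gcd N (q ^ d) ∣ gcd N q ^ d := gcd_pow_right_dvd_pow_gcd
    have h4 : gcd N q ^ d ∣ |b d| ^ d :=
      pow_dvd_pow_of_dvd (hgb.trans ((dvd_abs _ _).mpr dvd_rfl)) d
    have h5 : k ∣ G := by
      rw [hGdef]
      exact h1.trans (h2.trans (mul_dvd_mul (gcd_dvd_right N _) (h3.trans h4)))
    exact Int.le_of_dvd hG0 h5
  -- integer bounds on num and den of the image
  have hden_bound : q ^ d ≤ ((f.eval x).den : ℤ) * G := by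
    have hD1' : (1:ℤ) ≤ (D:ℤ) := by exact_mod_cast hD1
    have h1 : q ^ d ≤ M := by
      rw [hMdef]
      nlinarith [pow_pos (show (0:ℤ) < q by omega) d]
    have h2 : M ≤ ((f.eval x).den : ℤ) * G := by
      rw [hkM]
      exact mul_le_mul_of_nonneg_left hkG hden0.le
    linarith
  have hnum_bound : |N| ≤ |(f.eval x).num| * G := by
    rw [hkN, abs_mul, abs_of_pos hk0]
    exact mul_le_mul_of_nonneg_left hkG (abs_nonneg _)
  -- real estimates
  have hS1' : (1:ℝ) ≤ (S:ℝ) := by exact_mod_cast hS1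
  have hG1' : (1:ℝ) ≤ (G:ℝ) := by exact_mod_cast hG1
  set P : ℝ := |(p:ℝ)| with hPdef
  set Q : ℝ := ((q:ℤ) : ℝ) with hQdef
  have hQ1 : (1:ℝ) ≤ Q := by rw [hQdef]; exact_mod_cast hq1
  have hP0 : (0:ℝ) ≤ P := abs_nonneg _
  have hQ0 : (0:ℝ) ≤ Q := by linarith
  set Hx : ℝ := max P Q with hHdef
  have hHx1 : 1 ≤ Hx := le_max_of_le_right hQ1
  have hHx0 : 0 < Hx := lt_of_lt_of_le one_pos hHx1
  clear_value P Q Hx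
  have hq0' : (0:ℝ) ≤ ((q:ℤ):ℝ) := by exact_mod_cast (by linarith : (0:ℤ) ≤ q)
  have hqa : |((q:ℤ):ℝ)| = Q := by rw [hQdef]; exact abs_of_nonneg hq0'
  have hwx : weilHeight x = Real.log Hx := by
    have h1 : (x.num.natAbs : ℝ) = P := by
      rw [hPdef, hpdef, Nat.cast_natAbs, Int.cast_abs]
    have h2 : (x.den : ℝ) = Q := by
      rw [hQdef, hqdef]
      push_cast
      rfl
    unfold weilHeight
    rw [h1, h2, hHdef]
  have hdenpos : (0:ℝ) < ((f.eval x).den : ℝ) := by exact_mod_cast (f.eval x).pos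
  have hQG : Q ^ d ≤ ((f.eval x).den : ℝ) * (G:ℝ) := by
    rw [hQdef]
    exact_mod_cast hden_bound
  have hkey : Hx ^ d / ((G:ℝ) * (2 * (S:ℝ)) ^ d)
      ≤ max (((f.eval x).num.natAbs : ℝ)) (((f.eval x).den : ℝ)) := by
    by_cases hPQ : P ≤ 2 * (S:ℝ) * Q
    · refine le_trans ?_ (le_max_right _ _)
      rw [div_le_iff₀ (by positivity)]
      have h1 : Hx ≤ 2 * (S:ℝ) * Q := by
        rw [hHdef]
        have h0 : (1:ℝ) * Q ≤ (2 * (S:ℝ)) * Q :=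
          mul_le_mul_of_nonneg_right (by linarith) hQ0
        exact max_le hPQ (by linarith)
      calc Hx ^ d ≤ (2 * (S:ℝ) * Q) ^ d := pow_le_pow_left₀ (by positivity) h1 d
        _ = (2 * (S:ℝ)) ^ d * Q ^ d := by rw [mul_pow]
        _ ≤ (2 * (S:ℝ)) ^ d * (((f.eval x).den : ℝ) * (G:ℝ)) := by
            have h2 : (0:ℝ) ≤ (2 * (S:ℝ)) ^ d := by positivity
            exact mul_le_mul_of_nonneg_left hQG h2
        _ = ((f.eval x).den : ℝ) * ((G:ℝ) * (2 * (S:ℝ)) ^ d) := by ring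
    · push_neg at hPQ
      have hQP : Q ≤ P := by
        have h0 : (1:ℝ) * Q ≤ (2 * (S:ℝ)) * Q :=
          mul_le_mul_of_nonneg_right (by linarith) hQ0
        linarith
      have hHxP : Hx = P := by rw [hHdef]; exact max_eq_left hQP
      have hRbound : |(R:ℝ)| ≤ (S:ℝ) * P ^ (d-1) := by
        have hsum : |(R:ℝ)| ≤ ∑ i ∈ Finset.range d, |(b i : ℝ) * (p:ℝ) ^ i * (q:ℝ) ^ (d-1-i)| := by
          rw [hRdef]
          push_cast
          exact Finset.abs_sum_le_sum_abs _ _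
        have hterm : ∀ i ∈ Finset.range d,
            |(b i : ℝ) * (p:ℝ) ^ i * (q:ℝ) ^ (d-1-i)| ≤ |(b i:ℝ)| * P ^ (d-1) := by
          intro i hi
          have hid : i < d := Finset.mem_range.mp hi
          rw [abs_mul, abs_mul, abs_pow, abs_pow, ← hPdef]
          have h5 : P ^ i * |(q:ℝ)| ^ (d-1-i) ≤ P ^ (d-1) := by
            rw [hqa]
            calc P ^ i * Q ^ (d-1-i) ≤ P ^ i * P ^ (d-1-i) :=
                  mul_le_mul_of_nonneg_left (pow_le_pow_left₀ hQ0 hQP _) (pow_nonneg hP0 i)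
              _ = P ^ (d-1) := by rw [← pow_add]; congr 1; omega
          calc |(b i:ℝ)| * P ^ i * |(q:ℝ)| ^ (d-1-i)
              = |(b i:ℝ)| * (P ^ i * |(q:ℝ)| ^ (d-1-i)) := by ring
            _ ≤ |(b i:ℝ)| * P ^ (d-1) := mul_le_mul_of_nonneg_left h5 (abs_nonneg _)
        have hsum2 : ∑ i ∈ Finset.range d, |(b i : ℝ) * (p:ℝ) ^ i * (q:ℝ) ^ (d-1-i)|
            ≤ (∑ i ∈ Finset.range d, |(b i:ℝ)|) * P ^ (d-1) := by
          rw [Finset.sum_mul]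
          exact Finset.sum_le_sum hterm
        have hsum3 : (∑ i ∈ Finset.range d, |(b i:ℝ)|) ≤ (S:ℝ) := by
          have h6 : (∑ i ∈ Finset.range d, |b i|) ≤ S := by
            rw [hSdef]
            exact Finset.sum_le_sum_of_subset_of_nonneg
              (Finset.range_subset_range.mpr (by omega)) (fun i _ _ => abs_nonneg _)
          calc (∑ i ∈ Finset.range d, |(b i:ℝ)|)
              = ((∑ i ∈ Finset.range d, |b i| : ℤ) : ℝ) := by push_cast; rfl
            _ ≤ (S:ℝ) := by exact_mod_cast h6
        have hp1 : (0:ℝ) ≤ P ^ (d-1) := pow_nonneg hP0 _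
        have h7 := mul_le_mul_of_nonneg_right hsum3 hp1
        linarith
      have hqR : |(q:ℝ) * (R:ℝ)| ≤ P ^ d / 2 := by
        rw [abs_mul, hqa]
        have hPd : P ^ (d-1) * P = P ^ d := by rw [← pow_succ]; congr 1; omega
        have h7 : Q * |(R:ℝ)| ≤ Q * ((S:ℝ) * P ^ (d-1)) :=
          mul_le_mul_of_nonneg_left hRbound hQ0
        have h8 := mul_le_mul_of_nonneg_right hPQ.le (pow_nonneg hP0 (d-1))
        linarith
      have hNlow : P ^ d / 2 ≤ |(N:ℝ)| := by
        have hbd1 : (1:ℝ) ≤ |(b d:ℝ)| := by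
          have := Int.one_le_abs (show b d ≠ 0 from hbd)
          rw [show |(b d:ℝ)| = ((|b d| : ℤ) : ℝ) by push_cast; rfl]
          exact_mod_cast this
        have h7 : P ^ d ≤ |(b d : ℝ) * (p:ℝ) ^ d| := by
          rw [abs_mul, abs_pow, ← hPdef]
          have h7' := mul_le_mul_of_nonneg_right hbd1 (pow_nonneg hP0 d)
          linarith
        have h8 : (N:ℝ) = (q:ℝ) * (R:ℝ) + (b d:ℝ) * (p:ℝ)^d := by
          exact_mod_cast congrArg (fun z : ℤ => (z:ℝ)) hNsplit
        have h9 : |(b d:ℝ) * (p:ℝ)^d| ≤ |(N:ℝ)| + |(q:ℝ)*(R:ℝ)| := by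
          have : (b d:ℝ) * (p:ℝ)^d = (N:ℝ) - (q:ℝ)*(R:ℝ) := by rw [h8]; ring
          rw [this]
          exact abs_sub _ _
        linarith
      have hnum' : |(N:ℝ)| ≤ ((f.eval x).num.natAbs : ℝ) * (G:ℝ) := by
        have h10 : (|N| : ℤ) ≤ ((f.eval x).num.natAbs : ℤ) * G := by
          rwa [Int.abs_eq_natAbs ((f.eval x).num)] at hnum_bound
        calc |(N:ℝ)| = ((|N| : ℤ) : ℝ) := by push_cast; rfl
          _ ≤ (((f.eval x).num.natAbs : ℤ) * G : ℤ) := by exact_mod_cast h10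
          _ = ((f.eval x).num.natAbs : ℝ) * (G:ℝ) := by
              push_cast
              rw [Nat.cast_natAbs, Int.cast_abs]
      refine le_trans ?_ (le_max_left _ _)
      rw [hHxP, div_le_iff₀ (by positivity)]
      have h2S : (2:ℝ) ≤ (2*(S:ℝ))^d := by
        calc (2:ℝ) ≤ 2*(S:ℝ) := by linarith
          _ ≤ (2*(S:ℝ))^d := le_self_pow₀ (by linarith) (by omega)
      have hA0 : (0:ℝ) ≤ ((f.eval x).num.natAbs : ℝ) := by positivity
      have hfin2 := mul_le_mul_of_nonneg_left h2S
        (mul_nonneg hA0 (by linarith : (0:ℝ) ≤ (G:ℝ)))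
      linarith
  have hfin : Real.log (Hx ^ d / ((G:ℝ) * (2*(S:ℝ))^d)) ≤ weilHeight (f.eval x) := by
    unfold weilHeight
    exact Real.log_le_log (by positivity) hkey
  rw [Real.log_div (by positivity) (by positivity), Real.log_pow] at hfin
  rw [hwx]
  linarith

theorem height_tendsto_of_not_preperiodic (f : ℚ[X]) (d : ℕ)
    (hd : f.natDegree = d) (hd2 : 2 ≤ d) (γ : ℚ)
    (hγ : (Set.range fun n : ℕ => (fun x => f.eval x)^[n] γ).Infinite) :
    Tendsto (fun n : ℕ => weilHeight ((fun x => f.eval x)^[n] γ)) atTop atTop ∧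
      ∃ n₀ : ℕ, ∃ c : ℝ, 0 < c ∧ ∀ n : ℕ, n₀ ≤ n →
        c * (d : ℝ) ^ (n - n₀) ≤ weilHeight ((fun x => f.eval x)^[n] γ) := by
  obtain ⟨C, hC0, hC⟩ := exists_height_bound f d hd (by omega)
  set x : ℕ → ℚ := fun n => (fun y => f.eval y)^[n] γ with hxdef
  have hxs : ∀ n, x (n+1) = f.eval (x n) := fun n => by
    rw [hxdef]
    simp only
    rw [Function.iterate_succ_apply']
  have hf0 : f ≠ 0 := by intro h; rw [h] at hd; simp at hd; omega
  obtain ⟨Mr, hMr⟩ : ∃ Mr : ℝ, ∀ y : ℚ, f.eval y = 0 → weilHeight y ≤ Mr := by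
    have hfin : {y : ℚ | f.IsRoot y}.Finite := Polynomial.finite_setOf_isRoot hf0
    obtain ⟨Mr, hMr⟩ := (hfin.image weilHeight).bddAbove
    exact ⟨Mr, fun y hy => hMr ⟨y, hy, rfl⟩⟩
  have hd1' : (1:ℝ) ≤ (d:ℝ) - 1 := by
    have : (2:ℝ) ≤ (d:ℝ) := by exact_mod_cast hd2
    linarith
  set E : ℝ := C / ((d:ℝ) - 1) with hEdef
  have hE0 : 0 ≤ E := div_nonneg hC0 (by linarith)
  have hEC : ((d:ℝ) - 1) * E = C := by
    rw [hEdef]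
    field_simp
  set T : ℝ := max (E + 1) (Mr + 1) with hTdef
  obtain ⟨n₀, hn₀⟩ : ∃ n₀, T ≤ weilHeight (x n₀) := by
    by_contra h
    push_neg at h
    refine hγ (Set.Finite.subset (finite_setOf_weilHeight_le T) ?_)
    rintro _ ⟨n, rfl⟩
    exact (h n).le
  have key : ∀ m : ℕ, T ≤ weilHeight (x (n₀ + m)) ∧
      (weilHeight (x n₀) - E) * (d:ℝ)^m ≤ weilHeight (x (n₀ + m)) - E := by
    intro m
    induction m with
    | zero => simpa using hn₀
    | succ m ih =>
      obtain ⟨ihT, ihg⟩ := ih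
      have hne : f.eval (x (n₀ + m)) ≠ 0 := by
        intro h0
        have := hMr _ h0
        have : T ≤ Mr := le_trans ihT this
        have : Mr + 1 ≤ Mr := le_trans (le_max_right (E+1) (Mr+1)) this
        linarith
      have hstep : (d:ℝ) * weilHeight (x (n₀ + m)) - C ≤ weilHeight (x (n₀ + m + 1)) := by
        rw [hxs (n₀ + m)]
        exact hC _ hne
      have hTE : E + 1 ≤ weilHeight (x (n₀ + m)) := le_trans (le_max_left _ _) ihT
      have hTgoal : T ≤ weilHeight (x (n₀ + m + 1)) := by
        have h1 : (d:ℝ) * weilHeight (x (n₀ + m)) - C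
            = weilHeight (x (n₀ + m)) + ((d:ℝ) - 1) * (weilHeight (x (n₀ + m)) - E) := by
          rw [mul_sub, hEC]
          ring
        have h2 : 0 ≤ ((d:ℝ) - 1) * (weilHeight (x (n₀ + m)) - E) :=
          mul_nonneg (by linarith) (by linarith)
        have := hstep
        rw [h1] at this
        linarith
      refine ⟨by exact_mod_cast hTgoal, ?_⟩
      have h3 : (d:ℝ) * weilHeight (x (n₀ + m)) - C - E
          = (d:ℝ) * (weilHeight (x (n₀ + m)) - E) := by
        rw [mul_sub]
        linarith [hEC]
      have h4 : (weilHeight (x n₀) - E) * (d:ℝ)^(m+1)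
          ≤ (d:ℝ) * (weilHeight (x (n₀ + m)) - E) := by
        have hd0 : (0:ℝ) ≤ (d:ℝ) := by positivity
        calc (weilHeight (x n₀) - E) * (d:ℝ)^(m+1)
            = (d:ℝ) * ((weilHeight (x n₀) - E) * (d:ℝ)^m) := by ring
          _ ≤ (d:ℝ) * (weilHeight (x (n₀ + m)) - E) :=
              mul_le_mul_of_nonneg_left ihg hd0
      have : n₀ + (m + 1) = n₀ + m + 1 := by omega
      rw [this]
      linarith
  have hc0 : (0:ℝ) < weilHeight (x n₀) - E := by
    have : E + 1 ≤ weilHeight (x n₀) := le_trans (le_max_left _ _) hn₀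
    linarith
  have hbound : ∀ n : ℕ, n₀ ≤ n →
      (weilHeight (x n₀) - E) * (d:ℝ) ^ (n - n₀) ≤ weilHeight (x n) := by
    intro n hn
    obtain ⟨hT, hg⟩ := key (n - n₀)
    have hn' : n₀ + (n - n₀) = n := by omega
    rw [hn'] at hT hg
    linarith
  constructor
  · have h1 : Tendsto (fun m : ℕ => (d:ℝ)^m) atTop atTop :=
      tendsto_pow_atTop_atTop_of_one_lt (by exact_mod_cast (by omega : 1 < d))
    have h2 : Tendsto (fun n : ℕ => n - n₀) atTop atTop := tendsto_sub_atTop_nat n₀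
    have h3 : Tendsto (fun n : ℕ => (weilHeight (x n₀) - E) * (d:ℝ)^(n - n₀)) atTop atTop :=
      (h1.comp h2).const_mul_atTop hc0
    refine tendsto_atTop_mono' atTop ?_ h3
    filter_upwards [eventually_ge_atTop n₀] with n hn
    exact hbound n hn
  · exact ⟨n₀, weilHeight (x n₀) - E, hc0, hbound⟩
end

section
/- For the polynomial f(X) = (X-2)² + 2 ∈ 𝔽_p[X], if p is a prime with p ≡ 5 (mod 8), then f is dynamically irreducible over 𝔽_p, i.e., every iterate f^{(n)} is irreducible over 𝔽_p. -/
open Polynomial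

/-- The `n`-th iterate of a polynomial under composition. -/
noncomputable def iterPoly {K : Type*} [CommRing K] (f : K[X]) : ℕ → K[X]
  | 0 => X
  | n + 1 => f.comp (iterPoly f n)

open IntermediateField in
/-- Over a finite field of cardinality `≡ 1 (mod 4)`, `X ^ 2^n - a` is irreducible
for any nonsquare `a`. -/
lemma key_two_pow.{u} (n : ℕ) :
    ∀ (K : Type u) [Field K] [Fintype K], Fintype.card K % 4 = 1 →
      ∀ a : K, ¬ IsSquare a → Irreducible ((X : K[X]) ^ (2 ^ n) - C a) := by
  induction n with
  | zero =>
    intro K _ _ _ a _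
    simpa using irreducible_X_sub_C a
  | succ n IH =>
    intro K _ _ hq a ha
    have hA : a ≠ 0 := fun h => ha ⟨0, by simp [h]⟩
    have hchar : ringChar K ≠ 2 := by
      intro h
      have := FiniteField.even_card_of_char_two h
      omega
    have h2 : Irreducible ((X : K[X]) ^ 2 - C a) :=
      X_pow_sub_C_irreducible_of_prime Nat.prime_two
        (fun b hb => ha ⟨b, by rw [← hb]; ring⟩)
    obtain ⟨k, hk⟩ : ∃ k, Fintype.card K = 4 * k + 1 := ⟨Fintype.card K / 4, by omega⟩
    -- Euler's criterion for a
    have hq2 : Fintype.card K / 2 = 2 * k := by omega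
    have h1 : a ^ (Fintype.card K / 2) ≠ 1 :=
      fun h => ha ((FiniteField.isSquare_iff hchar hA).mpr h)
    have hEuler : a ^ (2 * k) = (-1 : K) := by
      have h3 : a ^ (2 * k) * a ^ (2 * k) = 1 := by
        rw [← pow_add]
        have : 2 * k + 2 * k = Fintype.card K - 1 := by omega
        rw [this]
        exact FiniteField.pow_card_sub_one_eq_one a hA
      rcases mul_self_eq_one_iff.mp h3 with h | h
      · exact absurd (hq2 ▸ h) h1
      · exact h
    have hne : (-1 : K) ≠ 1 := fun h => h1 (by rw [hq2, hEuler, h])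
    have h21 : (2 : ℕ) ^ (n + 1) = 2 ^ n * 2 := by ring
    rw [h21]
    apply X_pow_mul_sub_C_irreducible h2
    intro E _ _ x hx
    have hxi : IsIntegral K x := by
      by_contra h
      have := minpoly.eq_zero h
      rw [hx] at this
      exact X_pow_sub_C_ne_zero two_pos a this
    haveI : FiniteDimensional K K⟮x⟯ := adjoin.finiteDimensional hxi
    haveI : Finite K⟮x⟯ := Module.finite_of_finite K
    haveI : Fintype K⟮x⟯ := Fintype.ofFinite _
    have hrank : Module.finrank K K⟮x⟯ = 2 := by
      rw [adjoin.finrank hxi, hx, natDegree_X_pow_sub_C]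
    have hcard : Fintype.card K⟮x⟯ = (4 * k + 1) ^ 2 := by
      rw [Module.card_eq_pow_finrank (K := K), hrank, hk]
    -- the generator squares to a
    set g : K⟮x⟯ := AdjoinSimple.gen K x with hg
    have hx2 : x ^ 2 = algebraMap K E a := by
      have := minpoly.aeval K x
      rw [hx] at this
      simpa [sub_eq_zero] using this
    have hginj : Function.Injective (algebraMap K⟮x⟯ E) := (algebraMap K⟮x⟯ E).injective
    have hg2 : g ^ 2 = algebraMap K K⟮x⟯ a := by
      apply hginj
      rw [map_pow, AdjoinSimple.algebraMap_gen, hx2, ← IsScalarTower.algebraMap_apply]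
    have hgne : g ≠ 0 := by
      intro h
      apply hA
      have : g ^ 2 = 0 := by rw [h]; ring
      rw [hg2] at this
      exact (_root_.map_eq_zero (algebraMap K K⟮x⟯)).mp this
    have hcharL : ringChar K⟮x⟯ ≠ 2 := by
      intro h
      have h6 := FiniteField.even_card_of_char_two h
      have h4 : (4 * k + 1) ^ 2 = 16 * (k * k) + 8 * k + 1 := by ring
      rw [hcard] at h6
      omega
    have hneL : (-1 : K⟮x⟯) ≠ 1 := fun h =>
      hne ((algebraMap K K⟮x⟯).injective (by simpa using h))
    have hgns : ¬ IsSquare g := by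
      intro hsq
      have h1 : g ^ (Fintype.card K⟮x⟯ / 2) = 1 :=
        (FiniteField.isSquare_iff hcharL hgne).mp hsq
      have hdiv : Fintype.card K⟮x⟯ / 2 = 2 * (2 * k * (2 * k + 1)) := by
        have h4 : (4 * k + 1) ^ 2 = 16 * (k * k) + 8 * k + 1 := by ring
        rw [hcard]
        have h5 : 2 * (2 * k * (2 * k + 1)) = 8 * (k * k) + 4 * k := by ring
        omega
      rw [hdiv, pow_mul, hg2, pow_mul, ← map_pow, hEuler, map_neg, map_one,
        Odd.neg_one_pow ⟨k, by ring⟩] at h1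
      exact hneL h1
    exact IH K⟮x⟯ (by
      have h4 : (4 * k + 1) ^ 2 = 16 * (k * k) + 8 * k + 1 := by ring
      rw [hcard]; omega) g hgns

/-- For `f(X) = (X-2)² + 2` over `𝔽_p` with `p ≡ 5 (mod 8)`, every iterate of `f`
is irreducible over `𝔽_p`. -/
theorem dynamically_irreducible_example_quadratic (p : ℕ) [Fact p.Prime] (hp : p % 8 = 5) :
    ∀ n : ℕ, 1 ≤ n →
      Irreducible (iterPoly ((X - C 2) ^ 2 + C 2 : (ZMod p)[X]) n) := by
  have hp2 : p ≠ 2 := by intro h; omega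
  have hiter : ∀ n : ℕ, iterPoly ((X - C 2) ^ 2 + C 2 : (ZMod p)[X]) n
      = (X - C 2) ^ (2 ^ n) + C 2 := by
    intro n
    induction n with
    | zero => simp [iterPoly]
    | succ n ih =>
      rw [iterPoly, ih]
      simp only [add_comp, pow_comp, sub_comp, X_comp, C_comp]
      rw [add_sub_cancel_right, ← pow_mul, ← pow_succ]
  intro n _
  rw [hiter n]
  have hcard : Fintype.card (ZMod p) % 4 = 1 := by rw [ZMod.card]; omega
  have hns : ¬ IsSquare (-2 : ZMod p) := by
    rw [ZMod.exists_sq_eq_neg_two_iff hp2]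
    omega
  have hirr := key_two_pow n (ZMod p) hcard (-2) hns
  have heq : (algEquivAevalXAddC (-2 : ZMod p)) ((X : (ZMod p)[X]) ^ (2 ^ n) - C (-2))
      = (X - C 2) ^ (2 ^ n) + C 2 := by
    rw [algEquivAevalXAddC_apply, ← comp_eq_aeval]
    simp only [sub_comp, pow_comp, X_comp, C_comp, map_neg, neg_comp]
    ring
  rw [← heq]
  exact (MulEquiv.irreducible_iff (algEquivAevalXAddC (-2 : ZMod p)).toMulEquiv).mpr hirr
end

section
/- Let p be a prime such that 2 is a cubic non-residue modulo p and p ≡ 4 or 7 (mod 9). Then the polynomial f(X) = (X+2)³ - 2 is dynamically irreducible over 𝔽_p, i.e., every iterate f^{(n)} is irreducible over 𝔽_p. -/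
open Polynomial

lemma iterPoly_cubic_eq {K : Type*} [CommRing K] (n : ℕ) :
    iterPoly ((X + C 2) ^ 3 - C 2 : K[X]) n = (X + C 2) ^ 3 ^ n - C 2 := by
  induction n with
  | zero => simp [iterPoly]
  | succ n ih =>
      rw [iterPoly, ih]
      simp only [sub_comp, add_comp, pow_comp, X_comp, C_comp]
      rw [sub_add_cancel, ← pow_mul, pow_succ]

/-- If `2` is a cubic non-residue mod `p` and `p ≡ 4, 7 (mod 9)`, then every iterate of
`f(X) = (X+2)³ - 2` is irreducible over `𝔽_p`. -/
theorem dynamically_irreducible_example_cubic (p : ℕ) [Fact p.Prime]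
    (h2 : ¬ ∃ x : ZMod p, x ^ 3 = 2) (hp : p % 9 = 4 ∨ p % 9 = 7) :
    ∀ n : ℕ, 1 ≤ n →
      Irreducible (iterPoly ((X + C 2) ^ 3 - C 2 : (ZMod p)[X]) n) := by
  intro n _
  rw [iterPoly_cubic_eq]
  have hbase : Irreducible ((X : (ZMod p)[X]) ^ 3 ^ n - C 2) := by
    apply X_pow_sub_C_irreducible_of_odd (Odd.pow (⟨1, by norm_num⟩ : Odd 3))
    intro q hq hdvd b hb
    have hq3 : q = 3 := (Nat.prime_dvd_prime_iff_eq hq (by norm_num)).mp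
      (hq.dvd_of_dvd_pow hdvd)
    exact h2 ⟨b, by rw [← hq3, hb]⟩
  let e : (ZMod p)[X] ≃ₐ[ZMod p] (ZMod p)[X] :=
    algEquivOfCompEqX (X + C 2) (X - C 2) (by simp) (by simp)
  have he : e ((X : (ZMod p)[X]) ^ 3 ^ n - C 2) = (X + C 2) ^ 3 ^ n - C 2 := by
    simp [e, algEquivOfCompEqX_apply]
  rw [← he]
  exact (MulEquiv.irreducible_iff e.toMulEquiv).mpr hbase
end

section
/- Assume the ABC conjecture consequence (Langevin): for a polynomial g ∈ ℤ[X] of degree e ≥ 2 satisfying suitable conditions, rad(g(m)) ≥ |m|^{e-1+o(1)} as |m| → ∞, where rad(k) is the product of distinct primes dividing k. Then, writing |g(m)| = u·v² with u squarefree and v ≥ 1, one has u ≥ |m|^{e-2+o(1)} as |m| → ∞. -/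
open Polynomial

private lemma abs_eval_le' (g : ℤ[X]) (m : ℤ) (h1 : 1 ≤ |(m:ℝ)|) :
    |((g.eval m : ℤ) : ℝ)| ≤ (∑ i ∈ Finset.range (g.natDegree+1), |((g.coeff i : ℤ):ℝ)|) * |(m:ℝ)|^g.natDegree := by
  rw [Polynomial.eval_eq_sum_range]
  push_cast
  refine (Finset.abs_sum_le_sum_abs _ _).trans ?_
  rw [Finset.sum_mul]
  refine Finset.sum_le_sum fun i hi => ?_
  rw [abs_mul, abs_pow]
  exact mul_le_mul_of_nonneg_left (pow_le_pow_right₀ h1 (Nat.lt_succ_iff.mp (Finset.mem_range.mp hi))) (abs_nonneg _)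

private lemma rad_le_uv (u v : ℕ) (hu : u ≠ 0) (hv : v ≠ 0) :
    (u * v^2).primeFactors.prod id ≤ u * v := by
  have h : (u * v^2).primeFactors = (u*v).primeFactors := by
    rw [Nat.primeFactors_mul hu (pow_ne_zero 2 hv), Nat.primeFactors_pow _ two_ne_zero,
      Nat.primeFactors_mul hu hv]
  rw [h]
  exact Nat.le_of_dvd (Nat.mul_pos (Nat.pos_of_ne_zero hu) (Nat.pos_of_ne_zero hv))
    (Nat.prod_primeFactors_dvd _)

/-- Assume (a consequence of the ABC conjecture, due to Langevin) that for `g ∈ ℤ[X]` of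
degree `e ≥ 2` one has `rad(g(m)) ≥ |m|^{e-1+o(1)}` as `|m| → ∞`, where `rad k` is the
product of the distinct primes dividing `k`. Then, writing `|g(m)| = u v²` with `u`
squarefree and `v ≥ 1`, one has `u ≥ |m|^{e-2+o(1)}` as `|m| → ∞`. -/
theorem squarefree_part_lower_bound (g : ℤ[X]) (e : ℕ) (he : g.natDegree = e) (he2 : 2 ≤ e)
    (hrad : ∀ ε : ℝ, 0 < ε → ∃ M : ℝ, ∀ m : ℤ, M ≤ |(m : ℝ)| →
      |(m : ℝ)| ^ ((e : ℝ) - 1 - ε) ≤ (((g.eval m).natAbs.primeFactors.prod id : ℕ) : ℝ)) :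
    ∀ ε : ℝ, 0 < ε → ∃ M : ℝ, ∀ m : ℤ, M ≤ |(m : ℝ)| →
      ∀ u v : ℕ, Squarefree u → 1 ≤ v → (g.eval m).natAbs = u * v ^ 2 →
        |(m : ℝ)| ^ ((e : ℝ) - 2 - ε) ≤ (u : ℝ) := by
  intro ε hε
  obtain ⟨M', hM'⟩ := hrad (ε/4) (by positivity)
  set C : ℝ := ∑ i ∈ Finset.range (g.natDegree+1), |((g.coeff i : ℤ):ℝ)| with hCdef
  have hg0 : g ≠ 0 := fun h => by simp [h] at he; omega
  have hC1 : 1 ≤ C := by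
    have h1 : (1:ℝ) ≤ |((g.coeff g.natDegree : ℤ):ℝ)| := by
      have : g.coeff g.natDegree ≠ 0 := by
        rw [← Polynomial.leadingCoeff]; exact Polynomial.leadingCoeff_ne_zero.mpr hg0
      have := Int.one_le_abs this
      exact_mod_cast this
    refine h1.trans (Finset.single_le_sum (f := fun i => |((g.coeff i : ℤ):ℝ)|)
      (fun i _ => abs_nonneg _) (Finset.self_mem_range_succ _))
  refine ⟨max (max M' 1) (C ^ (2/ε)), fun m hm u v hsq hv huv => ?_⟩
  set r : ℝ := |(m:ℝ)| with hrdef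
  have hr1 : 1 ≤ r := le_trans (le_trans (le_max_right _ _) (le_max_left _ _)) hm
  have hr0 : 0 < r := lt_of_lt_of_le one_pos hr1
  have hR := hM' m (le_trans (le_trans (le_max_left _ _) (le_max_left _ _)) hm)
  set R : ℝ := (((g.eval m).natAbs.primeFactors.prod id : ℕ) : ℝ) with hRdef
  have hu0 : u ≠ 0 := hsq.ne_zero
  have hv0 : v ≠ 0 := by omega
  -- R ≤ u * v
  have hRuv : R ≤ (u:ℝ) * v := by
    rw [hRdef, huv]
    exact_mod_cast rad_le_uv u v hu0 hv0
  -- u * v^2 ≤ C * r^e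
  have heval : (u:ℝ) * (v:ℝ)^2 = |((g.eval m : ℤ):ℝ)| := by
    rw [← Int.cast_abs, Int.abs_eq_natAbs, huv]; push_cast; ring
  have hbound : (u:ℝ) * (v:ℝ)^2 ≤ C * r ^ e := by
    rw [heval, ← he]
    exact abs_eval_le' g m hr1
  have hCr : C ≤ r ^ (ε/2) := by
    have h1 : C ^ (2/ε) ≤ r := le_trans (le_max_right _ _) hm
    have hee : (2/ε)*(ε/2) = 1 := by field_simp
    calc C = C ^ ((2/ε)*(ε/2)) := by rw [hee, Real.rpow_one]
      _ = (C ^ (2/ε)) ^ (ε/2) := Real.rpow_mul (by linarith) _ _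
      _ ≤ r ^ (ε/2) := Real.rpow_le_rpow (by positivity) h1 (by positivity)
  have hA1 : (1:ℝ) ≤ (u:ℝ) := by exact_mod_cast Nat.one_le_iff_ne_zero.mpr hu0
  have hV1 : (1:ℝ) ≤ (v:ℝ) := by exact_mod_cast hv
  have hR0 : 0 ≤ R := by positivity
  -- R^2 ≤ u * (C * r^e)
  have hkey : R^2 ≤ (u:ℝ) * (C * r ^ e) := by
    calc R^2 ≤ ((u:ℝ)*v)^2 := pow_le_pow_left₀ hR0 hRuv 2
      _ = (u:ℝ) * ((u:ℝ) * (v:ℝ)^2) := by ring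
      _ ≤ (u:ℝ) * (C * r ^ e) := mul_le_mul_of_nonneg_left hbound (by linarith)
  -- r^{2e-2-ε/2} ≤ R^2
  have h1 : r ^ (2*(e:ℝ)-2-ε/2) ≤ R^2 := by
    have : r ^ (2*(e:ℝ)-2-ε/2) = (r ^ ((e:ℝ)-1-ε/4))^2 := by
      rw [sq, ← Real.rpow_add hr0]; ring_nf
    rw [this]
    exact pow_le_pow_left₀ (Real.rpow_nonneg hr0.le _) hR 2
  -- r^{e-2-ε} * (C * r^e) ≤ r^{2e-2-ε/2}
  have h2 : r ^ ((e:ℝ)-2-ε) * (C * r ^ e) ≤ r ^ (2*(e:ℝ)-2-ε/2) := by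
    have hre : (r:ℝ) ^ e = r ^ ((e:ℝ)) := (Real.rpow_natCast r e).symm
    calc r ^ ((e:ℝ)-2-ε) * (C * r ^ e)
        ≤ r ^ ((e:ℝ)-2-ε) * (r ^ (ε/2) * r ^ e) := by
          refine mul_le_mul_of_nonneg_left ?_ (Real.rpow_nonneg hr0.le _)
          exact mul_le_mul_of_nonneg_right hCr (by positivity)
      _ = r ^ (2*(e:ℝ)-2-ε/2) := by
          rw [hre, ← Real.rpow_add hr0, ← Real.rpow_add hr0]; ring_nf
  have hpos : 0 < C * r ^ e := by positivity
  have := le_trans h2 (le_trans h1 hkey)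
  exact le_of_mul_le_mul_right (by linarith [this]) hpos
end
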